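/- Let M be an FB-module over a commutative ring k. The assignment φ ↦ (φ[n])_{n≥0} is a bijection from the set of symmetric operations on M to the set of sequences of simple symmetric operations on M. -/

import Mathlib

/-!
Writing `I = A ∩ B`, a pair `(A, B)` of subsets of `S` is the disjoint pair `(A ∖ B, B ∖ A)` of
subsets of `S ∖ I`, with `I` added to both. Hence `φ^S_{A,B} = φ[|I|]^{S ∖ I}_{A ∖ B, B ∖ A}`,
so `φ` is determined by its simple parts. Conversely, given `ψ`, this formula with `ψ |I|` in
place of `φ[|I|]` is a symmetric operation, because a bijection carries the decomposition of
`(A, B)` to that of the image pair and preserves `|I|`; and taking `I = F` recovers `ψ n`.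
-/

/-- An FB-module over `k`: a functor from the groupoid of finite sets (modelled as finite
subsets of `ℕ`) and bijections to `k`-modules.  A bijection `S → T` is encoded by a
function `f : ℕ → ℕ` that is injective on `S` with `S.image f = T`; the functor only
depends on the restriction of `f` to `S` (`map_congr`). -/
structure FBModule (k : Type) [CommRing k] where
  M : Finset ℕ → Type
  [acg : ∀ S, AddCommGroup (M S)]
  [mod : ∀ S, Module k (M S)]
  map : ∀ (f : ℕ → ℕ) (S T : Finset ℕ), Set.InjOn f S → S.image f = T → (M S →ₗ[k] M T)
  map_id : ∀ (S : Finset ℕ) (h1 : Set.InjOn (id : ℕ → ℕ) S) (h2 : S.image id = S),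
    map id S S h1 h2 = LinearMap.id
  map_comp : ∀ (f g : ℕ → ℕ) (S T U : Finset ℕ) (h1 : Set.InjOn f S) (h2 : S.image f = T)
    (h3 : Set.InjOn g T) (h4 : T.image g = U) (h5 : Set.InjOn (g ∘ f) S)
    (h6 : S.image (g ∘ f) = U),
    map g T U h3 h4 ∘ₗ map f S T h1 h2 = map (g ∘ f) S U h5 h6
  map_congr : ∀ (f g : ℕ → ℕ) (S T : Finset ℕ) (h : ∀ x ∈ S, f x = g x)
    (h1 : Set.InjOn f S) (h2 : S.image f = T) (h3 : Set.InjOn g S) (h4 : S.image g = T),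
    map f S T h1 h2 = map g S T h3 h4

attribute [instance] FBModule.acg FBModule.mod

variable {k : Type} [CommRing k]

/-- The canonical identification `M(s) ≅ M(t)` for equal finite sets `s = t` (the action
of the identity bijection). -/
def FBModule.cast (N : FBModule k) {s t : Finset ℕ} (h : s = t) : N.M s →ₗ[k] N.M t :=
  N.map id s t (Set.injOn_id _) (by rwa [Finset.image_id])

/-- A symmetric operation `φ` on an FB-module `N`: for every finite set `S` and subsets
`A, B ⊆ S`, a `k`-linear map `φ^S_{A,B} : N(S∖B) → N(S∖A)`, natural with respect to
bijections. -/
structure SymOp (N : FBModule k) where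
  φ : ∀ (S A B : Finset ℕ), A ⊆ S → B ⊆ S → (N.M (S \ B) →ₗ[k] N.M (S \ A))
  natural : ∀ (f : ℕ → ℕ) (S T A B : Finset ℕ) (hA : A ⊆ S) (hB : B ⊆ S)
    (hf : Set.InjOn f S) (hT : S.image f = T)
    (hA' : A.image f ⊆ T) (hB' : B.image f ⊆ T)
    (h1 : Set.InjOn f ((S \ A : Finset ℕ) : Set ℕ)) (h2 : (S \ A).image f = T \ A.image f)
    (h3 : Set.InjOn f ((S \ B : Finset ℕ) : Set ℕ)) (h4 : (S \ B).image f = T \ B.image f),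
    N.map f (S \ A) (T \ A.image f) h1 h2 ∘ₗ φ S A B hA hB =
      φ T (A.image f) (B.image f) hA' hB' ∘ₗ N.map f (S \ B) (T \ B.image f) h3 h4

/-- A simple symmetric operation on an FB-module `N`: the same data as a symmetric
operation, but defined only for disjoint pairs of subsets. -/
structure SimpleSymOp (N : FBModule k) where
  φ : ∀ (S A B : Finset ℕ), A ⊆ S → B ⊆ S → Disjoint A B →
    (N.M (S \ B) →ₗ[k] N.M (S \ A))
  natural : ∀ (f : ℕ → ℕ) (S T A B : Finset ℕ) (hA : A ⊆ S) (hB : B ⊆ S)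
    (hAB : Disjoint A B) (hf : Set.InjOn f S) (hT : S.image f = T)
    (hA' : A.image f ⊆ T) (hB' : B.image f ⊆ T) (hAB' : Disjoint (A.image f) (B.image f))
    (h1 : Set.InjOn f ((S \ A : Finset ℕ) : Set ℕ)) (h2 : (S \ A).image f = T \ A.image f)
    (h3 : Set.InjOn f ((S \ B : Finset ℕ) : Set ℕ)) (h4 : (S \ B).image f = T \ B.image f),
    N.map f (S \ A) (T \ A.image f) h1 h2 ∘ₗ φ S A B hA hB hAB =
      φ T (A.image f) (B.image f) hA' hB' hAB' ∘ₗ N.map f (S \ B) (T \ B.image f) h3 h4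

section Lemmas

lemma union_sdiff_union_eq (S B F : Finset ℕ) (hF : Disjoint F S) :
    (S ∪ F) \ (B ∪ F) = S \ B := by
  ext x
  simp only [Finset.mem_sdiff, Finset.mem_union, not_or]
  constructor
  · rintro ⟨h1 | h1, h2, h3⟩
    · exact ⟨h1, h2⟩
    · exact absurd h1 h3
  · rintro ⟨h1, h2⟩
    exact ⟨Or.inl h1, h2, Finset.disjoint_right.mp hF h1⟩

end Lemmas

/-- The simple operation `φ[n]` associated to a symmetric operation `φ`, computed with
respect to a chosen finite set `F` of fresh elements (any `F` with `|F| = n` disjoint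
from `S` gives the same result, by naturality):
`φ[n]^S_{A,B} = φ^{S ⊔ F}_{A ∪ F, B ∪ F}`. -/
def SymOp.bracket {N : FBModule k} (φ : SymOp N) (S A B F : Finset ℕ)
    (hA : A ⊆ S) (hB : B ⊆ S) (hF : Disjoint F S) :
    N.M (S \ B) →ₗ[k] N.M (S \ A) :=
  N.cast (union_sdiff_union_eq S A F hF) ∘ₗ
    φ.φ (S ∪ F) (A ∪ F) (B ∪ F)
      (Finset.union_subset_union hA (Finset.Subset.refl F))
      (Finset.union_subset_union hB (Finset.Subset.refl F)) ∘ₗ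
    N.cast (union_sdiff_union_eq S B F hF).symm

namespace Finset

variable {α β : Type*} [DecidableEq α] [DecidableEq β]

lemma sdiff_inter_sdiff_sdiff (S A B : Finset α) : (S \ (A ∩ B)) \ (A \ B) = S \ A := by
  ext x
  simp only [mem_sdiff, mem_inter]
  tauto

lemma sdiff_inter_sdiff_sdiff' (S A B : Finset α) : (S \ (A ∩ B)) \ (B \ A) = S \ B := by
  rw [inter_comm, sdiff_inter_sdiff_sdiff]

lemma image_sdiff_of_injOn_of_subset {f : α → β} {S A B : Finset α} (hf : Set.InjOn f S)
    (hA : A ⊆ S) (hB : B ⊆ S) : (A \ B).image f = A.image f \ B.image f := by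
  rw [← sdiff_inter_self_left A B, image_sdiff_of_injOn (hf.mono hA) inter_subset_left,
    image_inter_of_injOn A B (hf.mono (Set.union_subset (coe_subset.mpr hA) (coe_subset.mpr hB))),
    sdiff_inter_self_left]

lemma union_inter_union_of_disjoint {A B : Finset α} (F : Finset α) (hAB : Disjoint A B) :
    (A ∪ F) ∩ (B ∪ F) = F := by
  rw [← inter_union_distrib_right, disjoint_iff_inter_eq_empty.mp hAB, empty_union]

end Finset

open Finset

namespace FBModule

variable (N : FBModule k)

@[simp]
lemma cast_rfl_apply {s : Finset ℕ} (h : s = s) (x : N.M s) : N.cast h x = x :=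
  LinearMap.congr_fun (N.map_id s _ _) x

@[simp]
lemma cast_cast_apply {s t u : Finset ℕ} (h₁ : s = t) (h₂ : t = u) (x : N.M s) :
    N.cast h₂ (N.cast h₁ x) = N.cast (h₁.trans h₂) x := by
  subst h₁ h₂
  simp

lemma map_apply_eq_cast (f : ℕ → ℕ) {s t s' t' : Finset ℕ} (hs : s = s') (ht : t = t')
    (hf : Set.InjOn f s) (hst : s.image f = t) (hf' : Set.InjOn f s') (hst' : s'.image f = t')
    (x : N.M s') :
    N.map f s' t' hf' hst' x = N.cast ht (N.map f s t hf hst (N.cast hs.symm x)) := by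
  subst hs ht
  simp

end FBModule

namespace SymOp

variable {N : FBModule k}

@[ext]
lemma ext {φ φ' : SymOp N}
    (h : ∀ S A B (hA : A ⊆ S) (hB : B ⊆ S), φ.φ S A B hA hB = φ'.φ S A B hA hB) : φ = φ' := by
  obtain ⟨φ, _⟩ := φ
  obtain ⟨φ', _⟩ := φ'
  obtain rfl : φ = φ' := by
    funext S A B hA hB
    exact h S A B hA hB
  rfl

lemma φ_apply_eq_cast (φ : SymOp N) {S S' A A' B B' : Finset ℕ}
    (hS : S = S') (hA : A = A') (hB : B = B') (pA : A ⊆ S) (pB : B ⊆ S)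
    (pA' : A' ⊆ S') (pB' : B' ⊆ S') (x : N.M (S' \ B')) :
    φ.φ S' A' B' pA' pB' x =
      N.cast (by rw [hS, hA]) (φ.φ S A B pA pB (N.cast (by rw [hS, hB]) x)) := by
  subst hS hA hB
  simp

def BracketsEq (φ : SymOp N) (ψ : ℕ → SimpleSymOp N) : Prop :=
  ∀ (n : ℕ) (S A B F : Finset ℕ) (hA : A ⊆ S) (hB : B ⊆ S)
    (hAB : Disjoint A B) (hF : Disjoint F S) (_ : F.card = n),
    φ.bracket S A B F hA hB hF = (ψ n).φ S A B hA hB hAB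

/-- `φ^S_{A,B} := (ψ m)^{S ∖ (A ∩ B)}_{A ∖ B, B ∖ A}` with `m = |A ∩ B|`. -/
def ofSimpleφ (ψ : ℕ → SimpleSymOp N) (S A B : Finset ℕ) (hA : A ⊆ S) (hB : B ⊆ S) :
    N.M (S \ B) →ₗ[k] N.M (S \ A) :=
  N.cast (sdiff_inter_sdiff_sdiff S A B) ∘ₗ
    (ψ #(A ∩ B)).φ (S \ (A ∩ B)) (A \ B) (B \ A)
      (sdiff_subset_sdiff hA inter_subset_right) (sdiff_subset_sdiff hB inter_subset_left)
      disjoint_sdiff_sdiff ∘ₗ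
    N.cast (sdiff_inter_sdiff_sdiff' S A B).symm

lemma ofSimpleφ_apply_eq_cast (ψ : ℕ → SimpleSymOp N) {S A B S₀ A₀ B₀ : Finset ℕ} {m : ℕ}
    (hA : A ⊆ S) (hB : B ⊆ S) (hm : #(A ∩ B) = m) (hS₀ : S \ (A ∩ B) = S₀)
    (hA₀ : A \ B = A₀) (hB₀ : B \ A = B₀) (pA : A₀ ⊆ S₀) (pB : B₀ ⊆ S₀) (pAB : Disjoint A₀ B₀)
    (x : N.M (S \ B)) :
    ofSimpleφ ψ S A B hA hB x =
      N.cast (by rw [← hS₀, ← hA₀, sdiff_inter_sdiff_sdiff])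
        ((ψ m).φ S₀ A₀ B₀ pA pB pAB
          (N.cast (by rw [← hS₀, ← hB₀, sdiff_inter_sdiff_sdiff']) x)) := by
  subst hm hS₀ hA₀ hB₀
  rfl

lemma ofSimpleφ_natural (ψ : ℕ → SimpleSymOp N)
    (f : ℕ → ℕ) (S T A B : Finset ℕ) (hA : A ⊆ S) (hB : B ⊆ S)
    (hf : Set.InjOn f S) (hT : S.image f = T)
    (hA' : A.image f ⊆ T) (hB' : B.image f ⊆ T)
    (h1 : Set.InjOn f ((S \ A : Finset ℕ) : Set ℕ)) (h2 : (S \ A).image f = T \ A.image f)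
    (h3 : Set.InjOn f ((S \ B : Finset ℕ) : Set ℕ)) (h4 : (S \ B).image f = T \ B.image f) :
    N.map f (S \ A) (T \ A.image f) h1 h2 ∘ₗ ofSimpleφ ψ S A B hA hB =
      ofSimpleφ ψ T (A.image f) (B.image f) hA' hB' ∘ₗ
        N.map f (S \ B) (T \ B.image f) h3 h4 := by
  subst hT
  have hI : A ∩ B ⊆ S := inter_subset_left.trans hA
  have hSI : (S \ (A ∩ B)).image f = S.image f \ (A ∩ B).image f :=
    image_sdiff_of_injOn hf hI
  have hfI : (A ∩ B).image f = A.image f ∩ B.image f :=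
    image_inter_of_injOn A B (hf.mono (Set.union_subset (coe_subset.mpr hA) (coe_subset.mpr hB)))
  have hfA : (A \ B).image f = A.image f \ B.image f := image_sdiff_of_injOn_of_subset hf hA hB
  have hfB : (B \ A).image f = B.image f \ A.image f := image_sdiff_of_injOn_of_subset hf hB hA
  have hfSA : ((S \ (A ∩ B)) \ (A \ B)).image f =
      (S.image f \ (A ∩ B).image f) \ (A \ B).image f := by
    rw [← hSI, image_sdiff_of_injOn_of_subset hf sdiff_subset (sdiff_subset.trans hA)]
  have hfSB : ((S \ (A ∩ B)) \ (B \ A)).image f =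
      (S.image f \ (A ∩ B).image f) \ (B \ A).image f := by
    rw [← hSI, image_sdiff_of_injOn_of_subset hf sdiff_subset (sdiff_subset.trans hB)]
  have pA : (A \ B).image f ⊆ S.image f \ (A ∩ B).image f :=
    hSI ▸ image_subset_image (sdiff_subset_sdiff hA inter_subset_right)
  have pB : (B \ A).image f ⊆ S.image f \ (A ∩ B).image f :=
    hSI ▸ image_subset_image (sdiff_subset_sdiff hB inter_subset_left)
  have pAB : Disjoint ((A \ B).image f) ((B \ A).image f) := hfA ▸ hfB ▸ disjoint_sdiff_sdiff
  have injA : Set.InjOn f ((S \ (A ∩ B)) \ (A \ B) : Finset ℕ) :=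
    hf.mono (coe_subset.mpr (sdiff_subset.trans sdiff_subset))
  have injB : Set.InjOn f ((S \ (A ∩ B)) \ (B \ A) : Finset ℕ) :=
    hf.mono (coe_subset.mpr (sdiff_subset.trans sdiff_subset))
  have hnat := (ψ #(A ∩ B)).natural f (S \ (A ∩ B)) _ (A \ B) (B \ A)
    (sdiff_subset_sdiff hA inter_subset_right) (sdiff_subset_sdiff hB inter_subset_left)
    disjoint_sdiff_sdiff (hf.mono (coe_subset.mpr sdiff_subset)) hSI pA pB pAB injA hfSA injB hfSB
  ext x
  rw [LinearMap.comp_apply, LinearMap.comp_apply, ofSimpleφ_apply_eq_cast ψ hA' hB'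
    (by rw [← hfI, card_image_of_injOn (hf.mono (coe_subset.mpr hI))]) (by rw [hfI])
    hfA.symm hfB.symm pA pB pAB]
  simp only [ofSimpleφ, LinearMap.comp_apply]
  rw [N.map_apply_eq_cast f (sdiff_inter_sdiff_sdiff S A B)
      (by rw [hfI, hfA, sdiff_inter_sdiff_sdiff]) injA hfSA,
    N.map_apply_eq_cast f (sdiff_inter_sdiff_sdiff' S A B)
      (by rw [hfI, hfB, sdiff_inter_sdiff_sdiff']) injB hfSB]
  simp only [FBModule.cast_cast_apply, FBModule.cast_rfl_apply]
  exact congrArg (N.cast _) (LinearMap.congr_fun hnat _)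

def ofSimple (ψ : ℕ → SimpleSymOp N) : SymOp N where
  φ := ofSimpleφ ψ
  natural := ofSimpleφ_natural ψ

lemma ofSimple_bracketsEq (ψ : ℕ → SimpleSymOp N) : (ofSimple ψ).BracketsEq ψ := by
  intro n S A B F hA hB hAB hF hn
  have hI : (A ∪ F) ∩ (B ∪ F) = F := union_inter_union_of_disjoint F hAB
  ext x
  simp only [bracket, ofSimple, LinearMap.comp_apply]
  rw [ofSimpleφ_apply_eq_cast ψ _ _ (by rw [hI, hn]) (by rw [hI, union_sdiff_cancel_right hF.symm])
    (by rw [union_sdiff_union_eq A B F (hF.mono_right hA), sdiff_eq_self_of_disjoint hAB])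
    (by rw [union_sdiff_union_eq B A F (hF.mono_right hB), sdiff_eq_self_of_disjoint hAB.symm])
    hA hB hAB]
  simp

lemma eq_ofSimple_of_bracketsEq {φ : SymOp N} {ψ : ℕ → SimpleSymOp N} (hφ : φ.BracketsEq ψ) :
    φ = ofSimple ψ := by
  ext S A B hA hB x
  have hsplit := hφ #(A ∩ B) (S \ (A ∩ B)) (A \ B) (B \ A) (A ∩ B)
    (sdiff_subset_sdiff hA inter_subset_right) (sdiff_subset_sdiff hB inter_subset_left)
    disjoint_sdiff_sdiff disjoint_sdiff rfl
  have hx := LinearMap.congr_fun hsplit (N.cast (sdiff_inter_sdiff_sdiff' S A B).symm x)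
  simp only [bracket, LinearMap.comp_apply] at hx
  rw [φ_apply_eq_cast φ (sdiff_union_of_subset (inter_subset_left.trans hA)).symm
    (sdiff_union_inter A B).symm (by rw [inter_comm, sdiff_union_inter]) hA hB] at hx
  simp only [FBModule.cast_cast_apply, FBModule.cast_rfl_apply] at hx
  simp only [ofSimple, ofSimpleφ, LinearMap.comp_apply]
  rw [← hx]
  simp

end SymOp

/-- the assignment `φ ↦ (φ[n])_{n ≥ 0}` is a bijection from the set of
symmetric operations on `M` to the set of sequences of simple symmetric operations on
`M`; equivalently, for every sequence `ψ` of simple symmetric operations there is a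
unique symmetric operation `φ` with `φ[n] = ψ n` for all `n`. -/
theorem statement11 (N : FBModule k) (ψ : ℕ → SimpleSymOp N) :
    ∃! φ : SymOp N, ∀ (n : ℕ) (S A B F : Finset ℕ) (hA : A ⊆ S) (hB : B ⊆ S)
      (hAB : Disjoint A B) (hF : Disjoint F S) (_ : F.card = n),
      φ.bracket S A B F hA hB hF = (ψ n).φ S A B hA hB hAB :=
  ⟨SymOp.ofSimple ψ, SymOp.ofSimple_bracketsEq ψ, fun _ hφ => SymOp.eq_ofSimple_of_bracketsEq hφ⟩
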